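/- Suppose a group Γ acts harmonically on a graph G with ramification number R = 2. Then exactly one of the following holds: (i) there is a single branch point y with (r_y, w_y) = (2, 1) or (r_y, w_y) = (1, 2); or (ii) there are exactly two branch points y₁, y₂, and up to reordering the vector (r₁, r₂; w₁, w₂) equals (2, 2; 0, 0), (1, 1; 1, 1), or (1, 2; 1, 0). -/

import Mathlib

open scoped Classical

/-- A finite connected multigraph without loop edges. -/
structure Multigraph where
  V : Type
  E : Type
  [fintypeV : Fintype V]
  [fintypeE : Fintype E]
  ends : E → Sym2 V
  loopless : ∀ e : E, ¬ (ends e).IsDiag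
  connected : (SimpleGraph.fromRel fun x y : V => ∃ e : E, ends e = s(x, y)).Connected

attribute [instance] Multigraph.fintypeV Multigraph.fintypeE

namespace Multigraph

/-- The genus (first Betti number, cyclomatic number) of a multigraph. -/
def genus (G : Multigraph) : ℤ :=
  (Fintype.card G.E : ℤ) - (Fintype.card G.V : ℤ) + 1

/-- A cycle in a multigraph, given as a nonempty set of edges such that every vertex is
incident to either 0 or 2 of its edges. -/
def IsCycleSet (G : Multigraph) (C : Set G.E) : Prop :=
  C.Nonempty ∧ ∀ x : G.V,
    Nat.card {e : G.E // e ∈ C ∧ x ∈ G.ends e} = 0 ∨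
    Nat.card {e : G.E // e ∈ C ∧ x ∈ G.ends e} = 2

end Multigraph

/-- A morphism of multigraphs: vertices go to vertices, and each edge goes either to an
edge joining the images of its endpoints, or to the common image of its endpoints
(in which case the edge is *vertical*). -/
structure Morphism (G G' : Multigraph) where
  vmap : G.V → G'.V
  emap : G.E → G'.E ⊕ G'.V
  compat : ∀ e : G.E,
    (∀ e', emap e = Sum.inl e' → G'.ends e' = (G.ends e).map vmap) ∧
    (∀ v, emap e = Sum.inr v → (G.ends e).map vmap = Sym2.diag v)

namespace Morphism

/-- A morphism is harmonic if for every vertex `x`, the number of edges incident to `x`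
mapping to a given edge `e'` incident to `φ(x)` is independent of the choice of `e'`. -/
def Harmonic {G G' : Multigraph} (φ : Morphism G G') : Prop :=
  ∀ (x : G.V) (e₁ e₂ : G'.E), φ.vmap x ∈ G'.ends e₁ → φ.vmap x ∈ G'.ends e₂ →
    Nat.card {e : G.E // x ∈ G.ends e ∧ φ.emap e = Sum.inl e₁} =
    Nat.card {e : G.E // x ∈ G.ends e ∧ φ.emap e = Sum.inl e₂}

/-- A morphism is nonconstant if its image is not a single vertex. -/
def Nonconstant {G G' : Multigraph} (φ : Morphism G G') : Prop :=
  ∃ x y : G.V, φ.vmap x ≠ φ.vmap y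

/-- Composition of morphisms of multigraphs. -/
def comp {G₁ G₂ G₃ : Multigraph} (ψ : Morphism G₂ G₃) (φ : Morphism G₁ G₂) :
    Morphism G₁ G₃ where
  vmap := ψ.vmap ∘ φ.vmap
  emap e := Sum.elim ψ.emap (fun v => Sum.inr (ψ.vmap v)) (φ.emap e)
  compat e := by
    constructor
    · intro e'' h
      rcases hφ : φ.emap e with e' | v
      · simp only [hφ, Sum.elim_inl] at h
        have h1 := (φ.compat e).1 e' hφ
        have h2 := (ψ.compat e').1 e'' h
        rw [h2, h1, Sym2.map_map]
      · simp only [hφ, Sum.elim_inr] at h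
        simp at h
    · intro v h
      rcases hφ : φ.emap e with e' | v₀
      · simp only [hφ, Sum.elim_inl] at h
        have h1 := (φ.compat e).1 e' hφ
        have h2 := (ψ.compat e').2 v h
        rw [← Sym2.map_map, ← h1]
        exact h2
      · simp only [hφ, Sum.elim_inr, Sum.inr.injEq] at h
        have h1 := (φ.compat e).2 v₀ hφ
        subst h
        rw [← Sym2.map_map, h1]
        rfl
end Morphism

/-- A group of automorphisms of a multigraph `G` (a faithful action of `Γ` on `G` by
automorphisms, i.e. a subgroup of `Aut(G)`). -/
structure GraphAction (Γ : Type) [Group Γ] (G : Multigraph) where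
  actV : Γ →* Equiv.Perm G.V
  actE : Γ →* Equiv.Perm G.E
  ends_map : ∀ (γ : Γ) (e : G.E), G.ends (actE γ e) = (G.ends e).map (actV γ)
  faithful : ∀ γ : Γ, (∀ x : G.V, actV γ x = x) → (∀ e : G.E, actE γ e = e) → γ = 1

namespace GraphAction

variable {Γ : Type} [Group Γ] {G : Multigraph}

/-- Two vertices lie in the same `Δ`-orbit. -/
def vrel (A : GraphAction Γ G) (Δ : Subgroup Γ) (x y : G.V) : Prop :=
  ∃ δ ∈ Δ, A.actV δ x = y

/-- Two edges lie in the same `Δ`-orbit. -/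
def erel (A : GraphAction Γ G) (Δ : Subgroup Γ) (e f : G.E) : Prop :=
  ∃ δ ∈ Δ, A.actE δ e = f

/-- The setoid of `Δ`-orbits of vertices. -/
def vSetoid (A : GraphAction Γ G) (Δ : Subgroup Γ) : Setoid G.V where
  r := A.vrel Δ
  iseqv := by
    constructor
    · intro x; exact ⟨1, Δ.one_mem, by simp⟩
    · rintro x y ⟨δ, hδ, h⟩
      refine ⟨δ⁻¹, Δ.inv_mem hδ, ?_⟩
      rw [map_inv, ← h]
      exact Equiv.symm_apply_apply _ _
    · rintro x y z ⟨δ₁, h1, e1⟩ ⟨δ₂, h2, e2⟩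
      refine ⟨δ₂ * δ₁, Δ.mul_mem h2 h1, ?_⟩
      rw [map_mul]
      simp [Equiv.Perm.mul_apply, e1, e2]

/-- The setoid of `Δ`-orbits of edges. -/
def eSetoid (A : GraphAction Γ G) (Δ : Subgroup Γ) : Setoid G.E where
  r := A.erel Δ
  iseqv := by
    constructor
    · intro e; exact ⟨1, Δ.one_mem, by simp⟩
    · rintro e f ⟨δ, hδ, h⟩
      refine ⟨δ⁻¹, Δ.inv_mem hδ, ?_⟩
      rw [map_inv, ← h]
      exact Equiv.symm_apply_apply _ _
    · rintro e f k ⟨δ₁, h1, e1⟩ ⟨δ₂, h2, e2⟩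
      refine ⟨δ₂ * δ₁, Δ.mul_mem h2 h1, ?_⟩
      rw [map_mul]
      simp [Equiv.Perm.mul_apply, e1, e2]

/-- An edge is `Δ`-vertical if its two endpoints lie in the same `Δ`-orbit (so it is
contracted by the quotient morphism `G → G/Δ`). -/
def Vertical (A : GraphAction Γ G) (Δ : Subgroup Γ) (e : G.E) : Prop :=
  ∃ x y : G.V, G.ends e = s(x, y) ∧ A.vrel Δ x y

/-- The vertex set of the quotient graph `G/Δ`: the `Δ`-orbits of vertices. -/
abbrev quotV (A : GraphAction Γ G) (Δ : Subgroup Γ) : Type :=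
  Quotient (A.vSetoid Δ)

/-- The edge set of the quotient graph `G/Δ`: the `Δ`-orbits of non-vertical edges. -/
abbrev quotE (A : GraphAction Γ G) (Δ : Subgroup Γ) : Type :=
  Quotient ((A.eSetoid Δ).comap (Subtype.val : {e : G.E // ¬ A.Vertical Δ e} → G.E))

/-- The genus of the quotient graph `G/Δ`. -/
noncomputable def quotGenus (A : GraphAction Γ G) (Δ : Subgroup Γ) : ℤ :=
  (Nat.card (A.quotE Δ) : ℤ) - (Nat.card (A.quotV Δ) : ℤ) + 1

/-- The order of the stabilizer `Δ_x` of a vertex `x`. -/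
noncomputable def stabOrder (A : GraphAction Γ G) (Δ : Subgroup Γ) (x : G.V) : ℕ :=
  Nat.card {γ : Γ // γ ∈ Δ ∧ A.actV γ x = x}

/-- The vertical multiplicity of a vertex `x`: the number of `Δ`-vertical edges
incident to `x`. -/
noncomputable def vertMult (A : GraphAction Γ G) (Δ : Subgroup Γ) (x : G.V) : ℕ :=
  Nat.card {e : G.E // x ∈ G.ends e ∧ A.Vertical Δ e}

/-- `r_y = |Δ_x|` for a vertex `y` of the quotient `G/Δ` and any `x` in the fiber over `y`. -/
noncomputable def r (A : GraphAction Γ G) (Δ : Subgroup Γ) (y : A.quotV Δ) : ℕ :=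
  A.stabOrder Δ (Quotient.out y)

/-- `w_y = v(x)/|Δ_x|` for a vertex `y` of the quotient `G/Δ` and any `x` in the fiber. -/
noncomputable def w (A : GraphAction Γ G) (Δ : Subgroup Γ) (y : A.quotV Δ) : ℕ :=
  A.vertMult Δ (Quotient.out y) / A.r Δ y

/-- The ramification number `R = Σ_y [2(1 - 1/r_y) + w_y]` of the quotient map `G → G/Δ`. -/
noncomputable def ram (A : GraphAction Γ G) (Δ : Subgroup Γ) : ℚ :=
  ∑ᶠ y : A.quotV Δ, (2 * (1 - 1 / (A.r Δ y : ℚ)) + (A.w Δ y : ℚ))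

/-- A vertex `y` of the quotient `G/Δ` is a branch point if `2(1 - 1/r_y) + w_y > 0`. -/
def IsBranch (A : GraphAction Γ G) (Δ : Subgroup Γ) (y : A.quotV Δ) : Prop :=
  0 < 2 * (1 - 1 / (A.r Δ y : ℚ)) + (A.w Δ y : ℚ)

/-- The quotient morphism `φ_Δ : G → G/Δ` is harmonic: for every vertex `x` of `G` and
every pair of quotient edges incident to the image of `x`, the numbers of preimages
incident to `x` agree. -/
def QuotHarmonic (A : GraphAction Γ G) (Δ : Subgroup Γ) : Prop :=
  ∀ (x : G.V) (e₁ e₂ : G.E), ¬ A.Vertical Δ e₁ → ¬ A.Vertical Δ e₂ →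
    (∃ v ∈ G.ends e₁, A.vrel Δ x v) → (∃ v ∈ G.ends e₂, A.vrel Δ x v) →
    Nat.card {e : G.E // x ∈ G.ends e ∧ A.erel Δ e e₁} =
    Nat.card {e : G.E // x ∈ G.ends e ∧ A.erel Δ e e₂}

/-- The quotient morphism `φ_Δ : G → G/Δ` is non-degenerate: no neighborhood `x(1)` is
contracted to a vertex, i.e. every vertex has a neighbor outside its `Δ`-orbit. -/
def QuotNondeg (A : GraphAction Γ G) (Δ : Subgroup Γ) : Prop :=
  ∀ x : G.V, ∃ e : G.E, x ∈ G.ends e ∧ ∃ y ∈ G.ends e, ¬ A.vrel Δ x y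

/-- `Γ` acts harmonically on `G` if for every subgroup `Δ ≤ Γ` the quotient morphism
`φ_Δ : G → G/Δ` is harmonic and non-degenerate. -/
def ActsHarmonically (A : GraphAction Γ G) : Prop :=
  ∀ Δ : Subgroup Γ, A.QuotHarmonic Δ ∧ A.QuotNondeg Δ

/-- The quotient map `G → G/Δ` is horizontally unramified: all vertex stabilizers in `Δ`
are trivial. -/
def HorizUnramified (A : GraphAction Γ G) (Δ : Subgroup Γ) : Prop :=
  ∀ (x : G.V) (γ : Γ), γ ∈ Δ → A.actV γ x = x → γ = 1

end GraphAction

/-- `M g` is the maximal order of a group acting harmonically on a graph of genus `g`. -/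
noncomputable def M (g : ℕ) : ℕ :=
  sSup {n : ℕ | ∃ (Γ : Type) (i : Group Γ) (G : Multigraph) (A : @GraphAction Γ i G),
    @GraphAction.ActsHarmonically Γ i G A ∧ G.genus = (g : ℤ) ∧ Nat.card Γ = n}

/-! Since `Γ` acts faithfully on a finite graph it is finite, so `r_y ≥ 1` and every summand
of `R` is nonnegative. Every branch point contributes at least `1` to `R`: either `r_y ≥ 2`,
giving `2(1 - 1/r_y) ≥ 1`, or `r_y = 1` and then `w_y ≥ 1`. So `R = 2` leaves room for one or
two branch points, and the possible pairs `(r_y, w_y)` are read off from `w_y r_y = 2` resp.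
`(w_y + 1) r_y = 2`. -/

def branchWeight (r w : ℕ) : ℚ :=
  2 * (1 - 1 / (r : ℚ)) + w

section branchWeight

variable {r w : ℕ}

lemma branchWeight_nonneg (hr : 1 ≤ r) : 0 ≤ branchWeight r w := by
  have hinv : 1 / (r : ℚ) ≤ 1 := div_le_one_of_le₀ (by exact_mod_cast hr) (by positivity)
  unfold branchWeight
  have : (0 : ℚ) ≤ w := Nat.cast_nonneg w
  linarith

lemma one_le_branchWeight_of_pos (hr : 1 ≤ r) (h : 0 < branchWeight r w) :
    1 ≤ branchWeight r w := by
  unfold branchWeight at h ⊢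
  obtain rfl | hr2 := hr.eq_or_lt
  · norm_num at h ⊢
    exact_mod_cast h
  · have hinv : 1 / (r : ℚ) ≤ 1 / 2 :=
      one_div_le_one_div_of_le two_pos (by exact_mod_cast hr2)
    have : (0 : ℚ) ≤ w := Nat.cast_nonneg w
    linarith

lemma branchWeight_eq_two (hr : 1 ≤ r) (h : branchWeight r w = 2) :
    (r = 2 ∧ w = 1) ∨ (r = 1 ∧ w = 2) := by
  have hr0 : (r : ℚ) ≠ 0 := by positivity
  have hwr : w * r = 2 := by
    unfold branchWeight at h
    field_simp at h
    exact_mod_cast (by linarith : (w : ℚ) * r = 2)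
  have : r ≤ 2 := Nat.le_of_dvd two_pos (Dvd.intro_left w hwr)
  interval_cases r <;> omega

lemma branchWeight_eq_one (hr : 1 ≤ r) (h : branchWeight r w = 1) :
    (r = 1 ∧ w = 1) ∨ (r = 2 ∧ w = 0) := by
  have hr0 : (r : ℚ) ≠ 0 := by positivity
  have hwr : (w + 1) * r = 2 := by
    unfold branchWeight at h
    field_simp at h
    exact_mod_cast (by push_cast; linarith : ((w + 1 : ℕ) : ℚ) * r = 2)
  have : r ≤ 2 := Nat.le_of_dvd two_pos (Dvd.intro_left (w + 1) hwr)
  interval_cases r <;> omega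

end branchWeight

lemma support_of_finsum_eq_two {ι : Type*} [Finite ι] (t : ι → ℚ) (h0 : ∀ i, 0 ≤ t i)
    (h1 : ∀ i, 0 < t i → 1 ≤ t i) (hsum : ∑ᶠ i, t i = 2) :
    (∃ i, t i = 2 ∧ ∀ j, 0 < t j → j = i) ∨
      ∃ i j, i ≠ j ∧ t i = 1 ∧ t j = 1 ∧ ∀ k, 0 < t k → k = i ∨ k = j := by
  have := Fintype.ofFinite ι
  set B := Finset.univ.filter fun i => 0 < t i
  have hmem : ∀ i, i ∈ B ↔ 0 < t i := by simp [B]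
  have hsumB : ∑ i ∈ B, t i = 2 := by
    rw [Finset.sum_filter_of_ne fun i _ hi => (h0 i).lt_of_ne' hi, ← finsum_eq_sum_of_fintype,
      hsum]
  have hcard : B.card ≤ 2 := by
    have : (B.card : ℚ) ≤ 2 := by
      calc (B.card : ℚ) = ∑ _i ∈ B, (1 : ℚ) := by simp
        _ ≤ ∑ i ∈ B, t i := Finset.sum_le_sum fun i hi => h1 i ((hmem i).1 hi)
        _ = 2 := hsumB
    exact_mod_cast this
  have hB : B.Nonempty := by
    by_contra hB
    rw [Finset.not_nonempty_iff_eq_empty.1 hB, Finset.sum_empty] at hsumB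
    norm_num at hsumB
  interval_cases hBc : B.card
  · exact absurd hBc (Finset.card_pos.2 hB).ne'
  · obtain ⟨i, hBi⟩ := Finset.card_eq_one.1 hBc
    rw [hBi, Finset.sum_singleton] at hsumB
    exact Or.inl ⟨i, hsumB, fun j hj => by simpa [hBi] using (hmem j).2 hj⟩
  · obtain ⟨i, j, hij, hBij⟩ := Finset.card_eq_two.1 hBc
    rw [hBij, Finset.sum_pair hij] at hsumB
    have hi := h1 i ((hmem i).1 (by simp [hBij]))
    have hj := h1 j ((hmem j).1 (by simp [hBij]))
    refine Or.inr ⟨i, j, hij, by linarith, by linarith, fun k hk => ?_⟩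
    simpa [hBij] using (hmem k).2 hk

namespace GraphAction

variable {Γ : Type} [Group Γ] {G : Multigraph}

lemma finite_group (A : GraphAction Γ G) : Finite Γ := by
  refine Finite.of_injective (A.actV.prod A.actE)
    ((injective_iff_map_eq_one _).2 fun γ hγ => ?_)
  exact A.faithful γ (fun x => congrArg (· x) (congrArg Prod.fst hγ))
    (fun e => congrArg (· e) (congrArg Prod.snd hγ))

lemma one_le_r (A : GraphAction Γ G) (Δ : Subgroup Γ) (y : A.quotV Δ) : 1 ≤ A.r Δ y := by
  have := A.finite_group
  have : Nonempty {γ : Γ // γ ∈ Δ ∧ A.actV γ y.out = y.out} :=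
    ⟨⟨1, Δ.one_mem, by simp⟩⟩
  exact Nat.card_pos

lemma ram_eq_finsum_branchWeight (A : GraphAction Γ G) (Δ : Subgroup Γ) :
    A.ram Δ = ∑ᶠ y, branchWeight (A.r Δ y) (A.w Δ y) :=
  rfl

lemma isBranch_iff (A : GraphAction Γ G) (Δ : Subgroup Γ) (y : A.quotV Δ) :
    A.IsBranch Δ y ↔ 0 < branchWeight (A.r Δ y) (A.w Δ y) :=
  Iff.rfl

end GraphAction

theorem branch_of_ram_eq_two_general {Γ : Type} [Group Γ] {G : Multigraph} (A : GraphAction Γ G)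
    (hR : A.ram ⊤ = 2) :
    ((∃! y : A.quotV ⊤, A.IsBranch ⊤ y) ∧
      ∀ y : A.quotV ⊤, A.IsBranch ⊤ y →
        (A.r ⊤ y = 2 ∧ A.w ⊤ y = 1) ∨ (A.r ⊤ y = 1 ∧ A.w ⊤ y = 2)) ∨
    (∃ y₁ y₂ : A.quotV ⊤, y₁ ≠ y₂ ∧ A.IsBranch ⊤ y₁ ∧ A.IsBranch ⊤ y₂ ∧
      (∀ y : A.quotV ⊤, A.IsBranch ⊤ y → y = y₁ ∨ y = y₂) ∧
      ((A.r ⊤ y₁ = 2 ∧ A.r ⊤ y₂ = 2 ∧ A.w ⊤ y₁ = 0 ∧ A.w ⊤ y₂ = 0) ∨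
       (A.r ⊤ y₁ = 1 ∧ A.r ⊤ y₂ = 1 ∧ A.w ⊤ y₁ = 1 ∧ A.w ⊤ y₂ = 1) ∨
       (A.r ⊤ y₁ = 1 ∧ A.r ⊤ y₂ = 2 ∧ A.w ⊤ y₁ = 1 ∧ A.w ⊤ y₂ = 0))) := by
  simp only [A.isBranch_iff]
  rw [A.ram_eq_finsum_branchWeight] at hR
  have hr := A.one_le_r ⊤
  rcases support_of_finsum_eq_two _ (fun y => branchWeight_nonneg (hr y))
      (fun y => one_le_branchWeight_of_pos (hr y)) hR with
    ⟨y, hy, huniq⟩ | ⟨a, b, hab, ha, hb, huniq⟩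
  · have hpos : 0 < branchWeight (A.r ⊤ y) (A.w ⊤ y) := by rw [hy]; norm_num
    refine Or.inl ⟨⟨y, hpos, huniq⟩, fun z hz => ?_⟩
    rw [huniq z hz]
    exact branchWeight_eq_two (hr y) hy
  · have hpos : ∀ {y}, branchWeight (A.r ⊤ y) (A.w ⊤ y) = 1 → 0 < branchWeight _ _ :=
      fun h => h ▸ one_pos
    right
    rcases branchWeight_eq_one (hr a) ha with ⟨hra, hwa⟩ | ⟨hra, hwa⟩ <;>
      rcases branchWeight_eq_one (hr b) hb with ⟨hrb, hwb⟩ | ⟨hrb, hwb⟩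
    · exact ⟨a, b, hab, hpos ha, hpos hb, huniq, Or.inr (Or.inl ⟨hra, hrb, hwa, hwb⟩)⟩
    · exact ⟨a, b, hab, hpos ha, hpos hb, huniq, Or.inr (Or.inr ⟨hra, hrb, hwa, hwb⟩)⟩
    · exact ⟨b, a, hab.symm, hpos hb, hpos ha, fun z hz => (huniq z hz).symm,
        Or.inr (Or.inr ⟨hrb, hra, hwb, hwa⟩)⟩
    · exact ⟨a, b, hab, hpos ha, hpos hb, huniq, Or.inl ⟨hra, hrb, hwa, hwb⟩⟩

/-- If `Γ` acts harmonically on `G` with `R = 2`, then exactly one of: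
(i) a single branch point with `(r, w) = (2, 1)` or `(1, 2)`; (ii) two branch points with
vector `(r₁, r₂; w₁, w₂)` equal (up to reordering) to `(2,2;0,0)`, `(1,1;1,1)` or
`(1,2;1,0)`. -/
theorem branch_of_ram_eq_two {Γ : Type} [Group Γ] {G : Multigraph} (A : GraphAction Γ G)
    (hA : A.ActsHarmonically) (hR : A.ram ⊤ = 2) :
    ((∃! y : A.quotV ⊤, A.IsBranch ⊤ y) ∧
      ∀ y : A.quotV ⊤, A.IsBranch ⊤ y →
        (A.r ⊤ y = 2 ∧ A.w ⊤ y = 1) ∨ (A.r ⊤ y = 1 ∧ A.w ⊤ y = 2)) ∨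
    (∃ y₁ y₂ : A.quotV ⊤, y₁ ≠ y₂ ∧ A.IsBranch ⊤ y₁ ∧ A.IsBranch ⊤ y₂ ∧
      (∀ y : A.quotV ⊤, A.IsBranch ⊤ y → y = y₁ ∨ y = y₂) ∧
      ((A.r ⊤ y₁ = 2 ∧ A.r ⊤ y₂ = 2 ∧ A.w ⊤ y₁ = 0 ∧ A.w ⊤ y₂ = 0) ∨
       (A.r ⊤ y₁ = 1 ∧ A.r ⊤ y₂ = 1 ∧ A.w ⊤ y₁ = 1 ∧ A.w ⊤ y₂ = 1) ∨
       (A.r ⊤ y₁ = 1 ∧ A.r ⊤ y₂ = 2 ∧ A.w ⊤ y₁ = 1 ∧ A.w ⊤ y₂ = 0))) :=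
  branch_of_ram_eq_two_general A hR
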